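/- For two linear chord diagrams C, C' on 2k vertices, the pairing α_C(a_{C'}) equals ±(2g)^r, where r is the number of connected components of the union graph C ∪ C' on the vertex set {1,...,2k}. -/

import Mathlib

/-!
Expanding every copy of `ω₀` in `a_{C'}` writes `α_C(a_{C'})` as a signed sum over labellings `ℓ`
of the `2k` vertices by basis vectors `xᵢ = inl i`, `yᵢ = inr i` in which each chord of `C'`
joins some `xᵢ` to `yᵢ`. The term of `ℓ` is nonzero exactly when each chord of `C` does too, i.e.
when `ℓ` intertwines both chord involutions with the swap `xᵢ ↔ yᵢ`. The components of `C ∪ C'`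
are even cycles, so twisting `ℓ` by the swap on one colour class makes it constant on components:
there are `(2g)^r` such labellings. All their terms have the same sign, because for two of them
the sign products over the first endpoints of the chords of `C` and of `C'` both equal
`(-1)^(m/2)`, where `m` counts the vertices at which the two labellings use different kinds of
basis vectors.
-/

/-- The standard symplectic vector space `H_ℚ = ℚ^{2g}`. -/
abbrev SympVec (g : ℕ) : Type := (Fin g ⊕ Fin g) → ℚ

open scoped TensorProduct

/-- Position `2s` among the `2k` vertices. -/
def posA {k : ℕ} (s : Fin k) : Fin (2 * k) := ⟨2 * s.1, by have := s.isLt; omega⟩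

/-- Position `2s+1` among the `2k` vertices. -/
def posB {k : ℕ} (s : Fin k) : Fin (2 * k) := ⟨2 * s.1 + 1, by have := s.isLt; omega⟩

/-- A linear chord diagram on `{1,...,2k}`: a partition into `k` pairs `(i_s, j_s)` with
`i_s < j_s`, recorded canonically (chords listed with increasing first entries) via the
permutation sending `(1,2,...,2k)` to `(i_1,j_1,...,i_k,j_k)`. -/
abbrev LinearChordDiagram (k : ℕ) : Type :=
  {π : Equiv.Perm (Fin (2 * k)) //
    (∀ s : Fin k, π (posA s) < π (posB s)) ∧
      ∀ s t : Fin k, s < t → π (posA s) < π (posA t)}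


noncomputable def chordVec (g k : ℕ) (π : Equiv.Perm (Fin (2 * k)))
    (t : Fin k → Fin g × Bool) (i : Fin (2 * k)) : SympVec g :=
  let j := π.symm i
  let s : Fin k := ⟨j.1 / 2, by have := j.isLt; omega⟩
  if j.1 % 2 = 0 then
    (if (t s).2 then Pi.single (Sum.inl (t s).1) 1 else Pi.single (Sum.inr (t s).1) 1)
  else
    (if (t s).2 then Pi.single (Sum.inr (t s).1) 1 else Pi.single (Sum.inl (t s).1) 1)

noncomputable def chordCoeff {g k : ℕ} (t : Fin k → Fin g × Bool) : ℚ :=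
  ∏ s : Fin k, (if (t s).2 then 1 else -1)

noncomputable def aTensor (g k : ℕ) (π : Equiv.Perm (Fin (2 * k))) :
    ⨂[ℚ] _ : Fin (2 * k), SympVec g :=
  ((Equiv.Perm.sign π : ℤ) : ℚ) •
    ∑ t : Fin k → Fin g × Bool, chordCoeff t • PiTensorProduct.tprod ℚ (chordVec g k π t)


noncomputable def pairForm (g : ℕ) : SympVec g →ₗ[ℚ] SympVec g →ₗ[ℚ] ℚ :=
  Matrix.toLinearMap₂' ℚ (Matrix.J (Fin g) ℚ)

noncomputable def contractPair (g : ℕ) : (⨂[ℚ] _ : Fin 2, SympVec g) →ₗ[ℚ] ℚ :=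
  (TensorProduct.lift (pairForm g)) ∘ₗ
    (TensorProduct.congr (PiTensorProduct.subsingletonEquiv (0 : Fin 1))
        (PiTensorProduct.subsingletonEquiv (0 : Fin 1))).toLinearMap ∘ₗ
    (PiTensorProduct.tmulEquiv (ι := Fin 1) (ι₂ := Fin 1) ℚ (SympVec g)).symm.toLinearMap ∘ₗ
    (PiTensorProduct.reindex ℚ (fun _ : Fin 2 => SympVec g)
      (finSumFinEquiv (m := 1) (n := 1)).symm).toLinearMap

noncomputable def contractStep (g k : ℕ) :
    (⨂[ℚ] _ : Fin (2 * (k + 1)), SympVec g) →ₗ[ℚ] ⨂[ℚ] _ : Fin (2 * k), SympVec g :=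
  (TensorProduct.lid ℚ _).toLinearMap ∘ₗ
    (TensorProduct.map (contractPair g) LinearMap.id) ∘ₗ
    (PiTensorProduct.tmulEquiv (ι := Fin 2) (ι₂ := Fin (2 * k)) ℚ (SympVec g)).symm.toLinearMap ∘ₗ
    (PiTensorProduct.reindex ℚ (fun _ : Fin (2 * (k + 1)) => SympVec g)
      ((finCongr (by ring : 2 * (k + 1) = 2 + 2 * k)).trans finSumFinEquiv.symm)).toLinearMap

/-- The full contraction of `H^{⊗2k}` pairing consecutive factors `(1,2),(3,4),...` by `μ`. -/
noncomputable def fullContraction (g : ℕ) : (k : ℕ) →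
    (⨂[ℚ] _ : Fin (2 * k), SympVec g) →ₗ[ℚ] ℚ
  | 0 =>
    haveI : IsEmpty (Fin (2 * 0)) := ⟨fun i => i.elim0⟩
    (PiTensorProduct.isEmptyEquiv (Fin (2 * 0))).toLinearMap
  | (k + 1) => (fullContraction g k) ∘ₗ contractStep g k

noncomputable def alphaHat (g k : ℕ) (π : Equiv.Perm (Fin (2 * k))) :
    (⨂[ℚ] _ : Fin (2 * k), SympVec g) →ₗ[ℚ] ℚ :=
  ((Equiv.Perm.sign π : ℤ) : ℚ) •
    ((fullContraction g k) ∘ₗ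
      (PiTensorProduct.reindex ℚ (fun _ : Fin (2 * k) => SympVec g) (π⁻¹ : Equiv.Perm (Fin (2 * k)))).toLinearMap)


/-- The involution of `{1,...,2k}` swapping `2s ↔ 2s+1` for each `s`. -/
def flipPairs (k : ℕ) : Equiv.Perm (Fin (2 * k)) :=
  Function.Involutive.toPerm
    (fun i => ⟨2 * (i.1 / 2) + (1 - i.1 % 2), by have := i.isLt; omega⟩)
    (by intro i; apply Fin.ext; simp; omega)

/-- The fixed-point-free involution whose orbits are the chords of `C`. -/
def chordInvolution {k : ℕ} (C : LinearChordDiagram k) : Equiv.Perm (Fin (2 * k)) :=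
  C.1 * flipPairs k * C.1⁻¹

/-- The number `r` of connected components of the union graph `C ∪ C'` on `{1,...,2k}`,
i.e. the number of orbits of the group generated by the two chord involutions. -/
noncomputable def unionComponents {k : ℕ} (C C' : LinearChordDiagram k) : ℕ :=
  Nat.card (MulAction.orbitRel.Quotient
    (Subgroup.closure {chordInvolution C, chordInvolution C'} :
      Subgroup (Equiv.Perm (Fin (2 * k)))) (Fin (2 * k)))


open Equiv Function

theorem exists_sum_eq_units_mul_card {α R : Type*} [Fintype α] [Ring R] [NoZeroDivisors R]
    (F : α → R) (P : α → Prop) (hzero : ∀ x, ¬ P x → F x = 0)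
    (hone : ∀ x y, P x → P y → F x * F y = 1) :
    ∃ ε : ℤˣ, ∑ x, F x = ((ε : ℤ) : R) * Nat.card {x // P x} := by
  classical
  obtain ⟨ε, hF⟩ : ∃ ε : ℤˣ, ∀ x, P x → F x = ((ε : ℤ) : R) := by
    by_cases h : ∃ x₀, P x₀
    · obtain ⟨x₀, hx₀⟩ := h
      have hconst : ∀ x, P x → F x = F x₀ := fun x hx => by
        calc F x = F x * (F x₀ * F x₀) := by rw [hone _ _ hx₀ hx₀, mul_one]
          _ = F x₀ := by rw [← mul_assoc, hone _ _ hx hx₀, one_mul]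
      rcases mul_self_eq_one_iff.mp (hone _ _ hx₀ hx₀) with h₁ | h₁
      · exact ⟨1, fun x hx => by rw [hconst x hx, h₁]; simp⟩
      · exact ⟨-1, fun x hx => by rw [hconst x hx, h₁]; simp⟩
    · exact ⟨1, fun x hx => absurd ⟨x, hx⟩ h⟩
  refine ⟨ε, ?_⟩
  have hF' : ∀ x, F x = if P x then ((ε : ℤ) : R) else 0 := fun x => by
    split_ifs with hx
    exacts [hF x hx, hzero x hx]
  simp only [hF', Finset.sum_ite, Finset.sum_const_zero, add_zero, Finset.sum_const,
    nsmul_eq_mul, Nat.card_eq_fintype_card, Fintype.card_subtype]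
  exact Nat.cast_comm _ _

def invariantFunEquiv {G V X : Type*} [Group G] [MulAction G V] (s : Set G) :
    {f : V → X // ∀ g ∈ s, ∀ i, f (g • i) = f i} ≃
      (MulAction.orbitRel.Quotient (Subgroup.closure s) V → X) where
  toFun f := Quotient.lift f.1 <| by
    have invariant : ∀ g ∈ Subgroup.closure s, ∀ i, f.1 (g • i) = f.1 i := by
      intro g hg
      induction hg using Subgroup.closure_induction with
      | mem g hg => exact f.2 g hg
      | one => simp
      | mul g h _ _ ihg ihh => intro i; rw [mul_smul, ihg, ihh]
      | inv g _ ih => intro i; rw [← ih, smul_inv_smul]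
    rintro _ i ⟨⟨g, hg⟩, rfl⟩
    exact invariant g hg i
  invFun F := ⟨F ∘ Quotient.mk _, fun g hg i =>
    congrArg F (Quotient.sound ⟨⟨g, Subgroup.subset_closure hg⟩, rfl⟩)⟩
  left_inv _ := rfl
  right_inv F := funext fun q => Quotient.inductionOn q fun _ => rfl

namespace TwoInvolutions

variable {V : Type*} {τ τ' : Perm V}

theorem mul_zpow_eq_zpow_neg_mul (hτ : τ * τ = 1) (hτ' : τ' * τ' = 1) {y : Perm V}
    (hy : y ∈ ({τ, τ'} : Set (Perm V))) (n : ℤ) : y * (τ * τ') ^ n = (τ * τ') ^ (-n) * y := by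
  have h : SemiconjBy y (τ * τ') (τ * τ')⁻¹ := by
    rw [SemiconjBy, mul_inv_rev, inv_eq_of_mul_eq_one_left hτ, inv_eq_of_mul_eq_one_left hτ']
    rcases hy with rfl | rfl
    · rw [← mul_assoc, hτ, one_mul, mul_assoc, hτ, mul_one]
    · rw [mul_assoc]
  rw [zpow_neg, ← inv_zpow]
  exact h.zpow_right n

theorem mul_mul_self_eq (hτ' : τ' * τ' = 1) : τ * τ' * τ' = τ := by
  rw [mul_assoc, hτ', mul_one]

theorem exists_zpow_of_mem_closure (hτ : τ * τ = 1) (hτ' : τ' * τ' = 1) {x : Perm V}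
    (hx : x ∈ Subgroup.closure {τ, τ'}) :
    ∃ n : ℤ, x = (τ * τ') ^ n ∨ x = (τ * τ') ^ n * τ' := by
  have rotate : ∀ y ∈ ({τ, τ'} : Set (Perm V)), ∀ n : ℤ,
      ∃ m : ℤ, y * (τ * τ') ^ n = (τ * τ') ^ m * τ' := by
    intro y hy n
    rw [mul_zpow_eq_zpow_neg_mul hτ hτ' hy]
    rcases hy with rfl | rfl
    · exact ⟨-n + 1, by rw [zpow_add_one, mul_assoc _ _ τ', mul_mul_self_eq hτ']⟩
    · exact ⟨-n, rfl⟩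
  have step : ∀ y ∈ ({τ, τ'} : Set (Perm V)), ∀ z : Perm V,
      (∃ n : ℤ, z = (τ * τ') ^ n ∨ z = (τ * τ') ^ n * τ') →
      ∃ n : ℤ, y * z = (τ * τ') ^ n ∨ y * z = (τ * τ') ^ n * τ' := by
    rintro y hy z ⟨n, rfl | rfl⟩ <;> obtain ⟨m, h⟩ := rotate y hy n
    · exact ⟨m, Or.inr h⟩
    · exact ⟨m, Or.inl (by rw [← mul_assoc, h, mul_mul_self_eq hτ'])⟩
  have inv_self : ∀ y ∈ ({τ, τ'} : Set (Perm V)), y⁻¹ = y := by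
    rintro y (rfl | rfl)
    exacts [inv_eq_of_mul_eq_one_left hτ, inv_eq_of_mul_eq_one_left hτ']
  induction hx using Subgroup.closure_induction_left with
  | one => exact ⟨0, Or.inl (zpow_zero _).symm⟩
  | mul_left y hy z _ ih => exact step y hy z ih
  | inv_mul_cancel y hy z _ ih => exact inv_self y hy ▸ step y hy z ih

/-- `(ττ')ⁿτ'` is conjugate to `τ` or to `τ'`. -/
theorem zpow_mul_apply_ne (hτ : τ * τ = 1) (hτ' : τ' * τ' = 1) (hfτ : ∀ i, τ i ≠ i)
    (hfτ' : ∀ i, τ' i ≠ i) (n : ℤ) (i : V) : ((τ * τ') ^ n * τ') i ≠ i := by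
  have conj_ne : ∀ (m : ℤ) {y : Perm V}, y ∈ ({τ, τ'} : Set (Perm V)) →
      ((τ * τ') ^ (2 * m) * y) i ≠ i := by
    intro m y hy h
    have hconj : (τ * τ') ^ (2 * m) * y = (τ * τ') ^ m * y * ((τ * τ') ^ m)⁻¹ := by
      rw [← zpow_neg, mul_assoc, mul_zpow_eq_zpow_neg_mul hτ hτ' hy (-m), neg_neg, ← mul_assoc,
        ← zpow_add, two_mul]
    rw [hconj, Perm.mul_apply, Perm.mul_apply, ← Perm.eq_inv_iff_eq] at h
    rcases hy with rfl | rfl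
    exacts [hfτ _ h, hfτ' _ h]
  obtain ⟨m, rfl | rfl⟩ := n.even_or_odd'
  · exact conj_ne m (Set.mem_insert_of_mem _ rfl)
  · rw [zpow_add_one, mul_assoc _ _ τ', mul_mul_self_eq hτ']
    exact conj_ne m (Set.mem_insert _ _)

theorem exists_zpow_apply_eq_apply_iff (hτ : τ * τ = 1) (hτ' : τ' * τ' = 1)
    (hfτ : ∀ i, τ i ≠ i) (hfτ' : ∀ i, τ' i ≠ i) {r i : V}
    (hi : ∃ x ∈ Subgroup.closure {τ, τ'}, x r = i) :
    (∃ m : ℤ, ((τ * τ') ^ m) r = τ' i) ↔ ¬ ∃ n : ℤ, ((τ * τ') ^ n) r = i := by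
  have hτ'_mem : τ' ∈ ({τ, τ'} : Set (Perm V)) := Set.mem_insert_of_mem _ rfl
  constructor
  · rintro ⟨m, hm⟩ ⟨n, hn⟩
    have key : (τ' * (τ * τ') ^ n) r = ((τ * τ') ^ (-n) * τ') r := by
      rw [mul_zpow_eq_zpow_neg_mul hτ hτ' hτ'_mem]
    rw [Perm.mul_apply, hn, ← hm, Perm.mul_apply] at key
    apply zpow_mul_apply_ne hτ hτ' hfτ hfτ' (-(n + m)) r
    rw [neg_add_rev, zpow_add, Perm.mul_apply, Perm.mul_apply, ← key, zpow_neg,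
      Perm.inv_eq_iff_eq]
  · intro h
    obtain ⟨x, hx, rfl⟩ := hi
    obtain ⟨n, rfl | rfl⟩ := exists_zpow_of_mem_closure hτ hτ' hx
    · exact absurd ⟨n, rfl⟩ h
    · refine ⟨-n, ?_⟩
      rw [← Perm.mul_apply, ← mul_assoc, mul_zpow_eq_zpow_neg_mul hτ hτ' hτ'_mem,
        mul_mul_self_eq hτ']

/-- Colour a vertex by whether a rotation `(ττ')ⁿ` carries the chosen representative of its orbit
to it. -/
theorem exists_bool_flip (hτ : τ * τ = 1) (hτ' : τ' * τ' = 1) (hfτ : ∀ i, τ i ≠ i)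
    (hfτ' : ∀ i, τ' i ≠ i) : ∃ p : V → Bool, ∀ i, p (τ i) = !p i ∧ p (τ' i) = !p i := by
  classical
  let G := Subgroup.closure ({τ, τ'} : Set (Perm V))
  let r : V → V := fun i => (Quotient.mk (MulAction.orbitRel G V) i).out
  have r_apply : ∀ x ∈ G, ∀ i, r (x i) = r i := fun x hx i =>
    congrArg Quotient.out (Quotient.sound ⟨⟨x, hx⟩, rfl⟩)
  have exists_apply_r : ∀ i, ∃ x ∈ G, x (r i) = i := fun i => by
    obtain ⟨⟨x, hx⟩, h⟩ := Quotient.mk_out (s := MulAction.orbitRel G V) i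
    exact ⟨x⁻¹, inv_mem hx, by rw [Perm.inv_eq_iff_eq]; exact h.symm⟩
  let p : V → Bool := fun i => decide (∃ n : ℤ, ((τ * τ') ^ n) (r i) = i)
  have p_τ' : ∀ i, p (τ' i) = !p i := fun i => by
    simp only [p, r_apply τ' (Subgroup.subset_closure (Set.mem_insert_of_mem _ rfl))]
    rw [← decide_not, decide_eq_decide]
    exact exists_zpow_apply_eq_apply_iff hτ hτ' hfτ hfτ' (exists_apply_r i)
  have p_rotation : ∀ j, p ((τ * τ') j) = p j := fun j => by
    simp only [p, r_apply _ (mul_mem (Subgroup.subset_closure (Set.mem_insert _ _))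
      (Subgroup.subset_closure (Set.mem_insert_of_mem _ rfl)))]
    rw [decide_eq_decide]
    constructor
    · rintro ⟨n, hn⟩
      exact ⟨-1 + n, by rw [zpow_add, zpow_neg_one, Perm.mul_apply, hn, Perm.inv_eq_iff_eq]⟩
    · rintro ⟨n, hn⟩
      exact ⟨1 + n, by rw [zpow_one_add, Perm.mul_apply, hn]⟩
  refine ⟨p, fun i => ⟨?_, p_τ' i⟩⟩
  rw [← mul_mul_self_eq hτ' (τ := τ), Perm.mul_apply, p_rotation, p_τ']

variable {X : Type*} {σ : X → X}

/-- Twisting by `σ` on one colour class turns `σ`-equivariant labellings into invariant ones. -/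
def twist (p : V → Bool) (σ : X → X) (ℓ : V → X) (i : V) : X :=
  if p i then σ (ℓ i) else ℓ i

theorem twist_involutive (p : V → Bool) (hσ : Involutive σ) : Involutive (twist p σ) :=
  fun ℓ => funext fun i => by by_cases h : p i <;> simp [twist, h, hσ _]

theorem semiconj_iff_twist {p : V → Bool} {y : V → V} (hp : ∀ i, p (y i) = !p i)
    (hσ : Involutive σ) (ℓ : V → X) :
    Semiconj ℓ y σ ↔ ∀ i, twist p σ ℓ (y i) = twist p σ ℓ i := by
  refine forall_congr' fun i => ?_
  by_cases h : p i <;> simp [twist, hp, h, hσ.eq_iff, eq_comm]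

theorem card_semiconj_semiconj [Finite V] (hτ : τ * τ = 1) (hτ' : τ' * τ' = 1)
    (hfτ : ∀ i, τ i ≠ i) (hfτ' : ∀ i, τ' i ≠ i) (hσ : Involutive σ) :
    Nat.card {ℓ : V → X // Semiconj ℓ τ σ ∧ Semiconj ℓ τ' σ} =
      Nat.card X ^ Nat.card (MulAction.orbitRel.Quotient (Subgroup.closure {τ, τ'}) V) := by
  obtain ⟨p, hp⟩ := exists_bool_flip hτ hτ' hfτ hfτ'
  have twistEquiv : {ℓ : V → X // Semiconj ℓ τ σ ∧ Semiconj ℓ τ' σ} ≃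
      {f : V → X // ∀ g ∈ ({τ, τ'} : Set (Perm V)), ∀ i, f (g • i) = f i} :=
    (twist_involutive p hσ).toPerm.subtypeEquiv fun ℓ => by
      simp only [Set.forall_mem_insert, Set.mem_singleton_iff, forall_eq, Perm.smul_def,
        Involutive.coe_toPerm, semiconj_iff_twist (fun i => (hp i).1) hσ,
        semiconj_iff_twist (fun i => (hp i).2) hσ]
  rw [Nat.card_congr (twistEquiv.trans (invariantFunEquiv _)), Nat.card_fun]

end TwoInvolutions

section Chords

variable {k : ℕ}

def chordEndpointEquiv (k : ℕ) : Fin k × Fin 2 ≃ Fin (2 * k) :=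
  finProdFinEquiv.trans (finCongr (mul_comm k 2))

theorem chordEndpointEquiv_zero (s : Fin k) : chordEndpointEquiv k (s, 0) = posA s := by
  ext; simp [chordEndpointEquiv, posA]

theorem chordEndpointEquiv_one (s : Fin k) : chordEndpointEquiv k (s, 1) = posB s := by
  ext; simp [chordEndpointEquiv, posB, add_comm]

theorem sum_eq_sum_posA_add_posB {M : Type*} [AddCommMonoid M] (h : Fin (2 * k) → M) :
    ∑ i, h i = ∑ s, (h (posA s) + h (posB s)) := by
  rw [← (chordEndpointEquiv k).sum_comp, Fintype.sum_prod_type]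
  simp [Fin.sum_univ_two, chordEndpointEquiv_zero, chordEndpointEquiv_one]

theorem exists_eq_posA_or_eq_posB (j : Fin (2 * k)) : ∃ s, j = posA s ∨ j = posB s := by
  obtain ⟨⟨s, b⟩, rfl⟩ := (chordEndpointEquiv k).surjective j
  refine ⟨s, ?_⟩
  fin_cases b
  exacts [Or.inl (chordEndpointEquiv_zero s), Or.inr (chordEndpointEquiv_one s)]

theorem flipPairs_val (i : Fin (2 * k)) : (flipPairs k i).1 = 2 * (i.1 / 2) + (1 - i.1 % 2) :=
  rfl

theorem flipPairs_posA (s : Fin k) : flipPairs k (posA s) = posB s := by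
  ext; simp only [flipPairs_val, posA, posB]; omega

theorem flipPairs_posB (s : Fin k) : flipPairs k (posB s) = posA s := by
  ext; simp only [flipPairs_val, posA, posB]; omega

theorem flipPairs_mul_self (k : ℕ) : flipPairs k * flipPairs k = 1 :=
  Equiv.ext (Involutive.toPerm_involutive _)

theorem flipPairs_apply_ne (i : Fin (2 * k)) : flipPairs k i ≠ i := by
  intro h
  have := congrArg Fin.val h
  rw [flipPairs_val] at this
  omega

theorem conj_flipPairs_mul_self (π : Perm (Fin (2 * k))) :
    π * flipPairs k * π⁻¹ * (π * flipPairs k * π⁻¹) = 1 := by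
  simp only [mul_assoc, inv_mul_cancel_left]
  rw [← mul_assoc (flipPairs k), flipPairs_mul_self, one_mul, mul_inv_cancel]

theorem conj_flipPairs_apply_ne (π : Perm (Fin (2 * k))) (i : Fin (2 * k)) :
    (π * flipPairs k * π⁻¹) i ≠ i := by
  intro h
  apply flipPairs_apply_ne (π⁻¹ i)
  rw [Perm.eq_inv_iff_eq]
  exact h

theorem conj_flipPairs_apply_posA (π : Perm (Fin (2 * k))) (s : Fin k) :
    (π * flipPairs k * π⁻¹) (π (posA s)) = π (posB s) := by
  simp [flipPairs_posA]

theorem conj_flipPairs_apply_posB (π : Perm (Fin (2 * k))) (s : Fin k) :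
    (π * flipPairs k * π⁻¹) (π (posB s)) = π (posA s) := by
  simp [flipPairs_posB]

theorem exists_eq_apply_posA_or_eq_apply_posB (π : Perm (Fin (2 * k))) (i : Fin (2 * k)) :
    ∃ s, i = π (posA s) ∨ i = π (posB s) := by
  simpa only [← Perm.inv_eq_iff_eq] using exists_eq_posA_or_eq_posB (π⁻¹ i)

theorem sum_eq_two_nsmul_sum_posA {M : Type*} [AddCommMonoid M] (π : Perm (Fin (2 * k)))
    {e : Fin (2 * k) → M} (he : ∀ i, e ((π * flipPairs k * π⁻¹) i) = e i) :
    ∑ i, e i = 2 • ∑ s, e (π (posA s)) := by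
  rw [← Equiv.sum_comp π, sum_eq_sum_posA_add_posB, Finset.smul_sum]
  refine Finset.sum_congr rfl fun s _ => ?_
  rw [← conj_flipPairs_apply_posA, he, two_nsmul]

end Chords

section Labels

variable {k : ℕ} {X : Type*} {σ : X → X}

def chordLabel (σ : X → X) (u : Fin k → X) (j : Fin (2 * k)) : X :=
  if j.1 % 2 = 0 then u ⟨j.1 / 2, by omega⟩ else σ (u ⟨j.1 / 2, by omega⟩)

theorem chordLabel_posA (σ : X → X) (u : Fin k → X) (s : Fin k) :
    chordLabel σ u (posA s) = u s := by
  simp [chordLabel, posA]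

theorem chordLabel_posB (σ : X → X) (u : Fin k → X) (s : Fin k) :
    chordLabel σ u (posB s) = σ (u s) := by
  simp [chordLabel, posB, Nat.mul_add_div]

theorem semiconj_chordLabel (hσ : Involutive σ) (u : Fin k → X) :
    Semiconj (chordLabel σ u) (flipPairs k) σ := by
  intro j
  obtain ⟨s, rfl | rfl⟩ := exists_eq_posA_or_eq_posB j
  · rw [flipPairs_posA, chordLabel_posA, chordLabel_posB]
  · rw [flipPairs_posB, chordLabel_posA, chordLabel_posB, hσ]

def standardLabelEquiv (hσ : Involutive σ) :
    (Fin k → X) ≃ {ℓ : Fin (2 * k) → X // Semiconj ℓ (flipPairs k) σ} where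
  toFun u := ⟨chordLabel σ u, semiconj_chordLabel hσ u⟩
  invFun ℓ s := ℓ.1 (posA s)
  left_inv u := funext (chordLabel_posA σ u)
  right_inv ℓ := by
    refine Subtype.ext (funext fun j => ?_)
    show chordLabel σ (fun s => ℓ.1 (posA s)) j = ℓ.1 j
    obtain ⟨s, rfl | rfl⟩ := exists_eq_posA_or_eq_posB j
    · exact chordLabel_posA σ _ s
    · rw [chordLabel_posB, ← ℓ.2, flipPairs_posA]

theorem semiconj_comp_symm_iff {V : Type*} (π : Perm V) (f : Perm V) (ℓ : V → X) :
    Semiconj (ℓ ∘ π.symm) (π * f * π⁻¹) σ ↔ Semiconj ℓ f σ := by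
  unfold Semiconj
  rw [← π.forall_congr_right]
  simp [Perm.inv_def]

def labelEquiv (hσ : Involutive σ) (π : Perm (Fin (2 * k))) :
    (Fin k → X) ≃ {ℓ : Fin (2 * k) → X // Semiconj ℓ ⇑(π * flipPairs k * π⁻¹) σ} :=
  (standardLabelEquiv hσ).trans <|
    (π.arrowCongr (Equiv.refl X)).subtypeEquiv fun ℓ => (semiconj_comp_symm_iff π _ ℓ).symm

theorem semiconj_conj_flipPairs_iff (hσ : Involutive σ) (π : Perm (Fin (2 * k)))
    (ℓ : Fin (2 * k) → X) :
    Semiconj ℓ ⇑(π * flipPairs k * π⁻¹) σ ↔ ∀ s, ℓ (π (posB s)) = σ (ℓ (π (posA s))) := by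
  refine ⟨fun h s => conj_flipPairs_apply_posA π s ▸ h (π (posA s)), fun h i => ?_⟩
  obtain ⟨s, rfl | rfl⟩ := exists_eq_apply_posA_or_eq_apply_posB π i
  · rw [conj_flipPairs_apply_posA, h]
  · rw [conj_flipPairs_apply_posB, h, hσ]

end Labels

section Signs

variable {l R : Type*} [CommRing R]

def sideSign : l ⊕ l → R := Sum.elim 1 (-1)

theorem J_apply_eq [DecidableEq l] (x y : l ⊕ l) :
    Matrix.J l R x y = if y = x.swap then -sideSign x else 0 := by
  rcases x with a | a <;> rcases y with b | b <;> by_cases h : a = b <;>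
    simp [Matrix.J, sideSign, h, Ne.symm]

theorem sideSign_mul_sideSign (x y : l ⊕ l) :
    sideSign x * sideSign y = (-1 : R) ^ (if x.isLeft = y.isLeft then 0 else 1) := by
  rcases x with a | a <;> rcases y with b | b <;> simp [sideSign]

end Signs

/-- The term of the labelling `ℓ` in `α_C(a_{C'})` (for `C = π`, `C' = π'`, up to `sgn π sgn π'`):
the sign of the chosen terms of the copies of `ω₀`, times the contraction along the chords of `C`.
-/
def chordWeight {k : ℕ} {l : Type*} [DecidableEq l] (π π' : Perm (Fin (2 * k)))
    (ℓ : Fin (2 * k) → l ⊕ l) : ℚ :=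
  (∏ s, sideSign (ℓ (π' (posA s)))) * ∏ s, Matrix.J l ℚ (ℓ (π (posA s))) (ℓ (π (posB s)))

/-- `(i, true)` and `(i, false)` pick the terms `xᵢ ⊗ yᵢ` and `-yᵢ ⊗ xᵢ` of `ω₀`. -/
def signedEquiv (α : Type*) : α × Bool ≃ α ⊕ α where
  toFun p := if p.2 then .inl p.1 else .inr p.1
  invFun := Sum.elim (·, true) (·, false)
  left_inv := by rintro ⟨a, _ | _⟩ <;> rfl
  right_inv := by rintro (a | a) <;> rfl

theorem chordCoeff_eq {g k : ℕ} (t : Fin k → Fin g × Bool) :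
    chordCoeff t = ∏ s, sideSign (signedEquiv (Fin g) (t s)) := by
  refine Finset.prod_congr rfl fun s _ => ?_
  split_ifs with h <;> simp [signedEquiv, sideSign, h]

theorem chordVec_eq (g k : ℕ) (π : Perm (Fin (2 * k))) (t : Fin k → Fin g × Bool)
    (i : Fin (2 * k)) :
    chordVec g k π t i =
      Pi.single (chordLabel Sum.swap (fun s => signedEquiv (Fin g) (t s)) (π.symm i)) 1 := by
  dsimp only [chordVec, chordLabel, signedEquiv, Equiv.coe_fn_mk]
  split_ifs <;> rfl

theorem pairForm_single (g : ℕ) (x y : Fin g ⊕ Fin g) :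
    pairForm g (Pi.single x 1) (Pi.single y 1) = Matrix.J (Fin g) ℚ x y := by
  simp [pairForm, Matrix.toLinearMap₂'_apply, Pi.single_apply]

theorem contractPair_tprod (g : ℕ) (v : Fin 2 → SympVec g) :
    contractPair g (PiTensorProduct.tprod ℚ v) = pairForm g (v 0) (v 1) := by
  simp only [contractPair, LinearMap.comp_apply, LinearEquiv.coe_coe,
    PiTensorProduct.reindex_tprod, PiTensorProduct.tmulEquiv_symm_apply, TensorProduct.congr_tmul,
    PiTensorProduct.subsingletonEquiv_apply_tprod, TensorProduct.lift.tmul]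
  rfl

theorem contractStep_tprod (g k : ℕ) (w : Fin (2 * (k + 1)) → SympVec g) :
    contractStep g k (PiTensorProduct.tprod ℚ w) =
      pairForm g (w (posA 0)) (w (posB 0)) •
        PiTensorProduct.tprod ℚ (fun i : Fin (2 * k) => w ⟨i + 2, by omega⟩) := by
  simp only [contractStep, LinearMap.comp_apply, LinearEquiv.coe_coe,
    PiTensorProduct.reindex_tprod, PiTensorProduct.tmulEquiv_symm_apply, TensorProduct.map_tmul,
    LinearMap.id_coe, id_eq, contractPair_tprod, TensorProduct.lid_tmul]
  congr 3 with i
  congr 1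
  ext
  simp [finSumFinEquiv]

theorem fullContraction_tprod (g : ℕ) : ∀ (k : ℕ) (w : Fin (2 * k) → SympVec g),
    fullContraction g k (PiTensorProduct.tprod ℚ w) =
      ∏ s : Fin k, pairForm g (w (posA s)) (w (posB s))
  | 0, w => by simp [fullContraction]
  | k + 1, w => by
    rw [fullContraction, LinearMap.comp_apply, contractStep_tprod, map_smul,
      fullContraction_tprod g k, Fin.prod_univ_succ, smul_eq_mul]
    congr 3

theorem alphaHat_tprod (g k : ℕ) (π : Perm (Fin (2 * k))) (w : Fin (2 * k) → SympVec g) :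
    alphaHat g k π (PiTensorProduct.tprod ℚ w) =
      ((Perm.sign π : ℤ) : ℚ) * ∏ s : Fin k, pairForm g (w (π (posA s))) (w (π (posB s))) := by
  simp [alphaHat, PiTensorProduct.reindex_tprod, fullContraction_tprod, Perm.inv_def]

theorem alphaHat_aTensor (g k : ℕ) (π π' : Perm (Fin (2 * k))) :
    alphaHat g k π (aTensor g k π') = ((Perm.sign π : ℤ) : ℚ) * ((Perm.sign π' : ℤ) : ℚ) *
      ∑ t : Fin k → Fin g × Bool,
        chordWeight π π' (chordLabel Sum.swap (fun s => signedEquiv (Fin g) (t s)) ∘ π'.symm) := by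
  simp only [aTensor, map_smul, map_sum, alphaHat_tprod, smul_eq_mul, Finset.mul_sum]
  refine Finset.sum_congr rfl fun t _ => ?_
  simp only [chordWeight, chordVec_eq, pairForm_single, chordCoeff_eq, comp_apply,
    symm_apply_apply, chordLabel_posA]
  ring

section Weight

variable {k : ℕ} {l : Type*} {π π' : Perm (Fin (2 * k))} {ℓ ℓ' : Fin (2 * k) → l ⊕ l}

theorem chordWeight_eq_zero [DecidableEq l] (h : ¬ Semiconj ℓ ⇑(π * flipPairs k * π⁻¹) Sum.swap) :
    chordWeight π π' ℓ = 0 := by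
  rw [semiconj_conj_flipPairs_iff Sum.swap_swap, not_forall] at h
  obtain ⟨s, hs⟩ := h
  exact mul_eq_zero_of_right _ <|
    Finset.prod_eq_zero (Finset.mem_univ s) (by rw [J_apply_eq, if_neg hs])

theorem chordWeight_eq [DecidableEq l] (h : Semiconj ℓ ⇑(π * flipPairs k * π⁻¹) Sum.swap) :
    chordWeight π π' ℓ =
      (-1) ^ k * (∏ s, sideSign (ℓ (π' (posA s)))) * ∏ s, sideSign (ℓ (π (posA s))) := by
  rw [semiconj_conj_flipPairs_iff Sum.swap_swap] at h
  simp only [chordWeight, h, J_apply_eq, if_true, neg_eq_neg_one_mul (sideSign _),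
    Finset.prod_mul_distrib, Finset.prod_const, Finset.card_univ, Fintype.card_fin]
  ring

theorem prod_sideSign_mul_prod_sideSign (hℓ : Semiconj ℓ ⇑(π * flipPairs k * π⁻¹) Sum.swap)
    (hℓ' : Semiconj ℓ' ⇑(π * flipPairs k * π⁻¹) Sum.swap) :
    (∏ s, sideSign (ℓ (π (posA s)))) * ∏ s, sideSign (ℓ' (π (posA s))) =
      (-1 : ℚ) ^ ((∑ i, if (ℓ i).isLeft = (ℓ' i).isLeft then 0 else 1) / 2) := by
  have hsum := sum_eq_two_nsmul_sum_posA π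
    (e := fun i => if (ℓ i).isLeft = (ℓ' i).isLeft then 0 else 1) fun i => by
      rw [hℓ i, hℓ' i]
      cases ℓ i <;> cases ℓ' i <;> rfl
  rw [← Finset.prod_mul_distrib, hsum, smul_eq_mul, Nat.mul_div_cancel_left _ two_pos,
    ← Finset.prod_pow_eq_pow_sum]
  exact Finset.prod_congr rfl fun s _ => sideSign_mul_sideSign _ _

theorem chordWeight_mul_chordWeight [DecidableEq l]
    (hℓ : Semiconj ℓ ⇑(π * flipPairs k * π⁻¹) Sum.swap)
    (hℓ' : Semiconj ℓ' ⇑(π * flipPairs k * π⁻¹) Sum.swap)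
    (h'ℓ : Semiconj ℓ ⇑(π' * flipPairs k * π'⁻¹) Sum.swap)
    (h'ℓ' : Semiconj ℓ' ⇑(π' * flipPairs k * π'⁻¹) Sum.swap) :
    chordWeight π π' ℓ * chordWeight π π' ℓ' = 1 := by
  have neg_one_pow_mul_self : ∀ n : ℕ, (-1 : ℚ) ^ n * (-1) ^ n = 1 := fun n => by
    rw [← mul_pow]; norm_num
  rw [chordWeight_eq hℓ, chordWeight_eq hℓ']
  calc _ = (-1 : ℚ) ^ k * (-1) ^ k *
        ((∏ s, sideSign (ℓ (π' (posA s)))) * ∏ s, sideSign (ℓ' (π' (posA s)))) *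
        ((∏ s, sideSign (ℓ (π (posA s)))) * ∏ s, sideSign (ℓ' (π (posA s)))) := by ring
    _ = 1 := by
      rw [prod_sideSign_mul_prod_sideSign h'ℓ h'ℓ', prod_sideSign_mul_prod_sideSign hℓ hℓ',
        neg_one_pow_mul_self, one_mul, neg_one_pow_mul_self]

end Weight

theorem card_semiconj_eq_pow_unionComponents (g : ℕ) {k : ℕ} (C C' : LinearChordDiagram k) :
    Nat.card {ℓ : Fin (2 * k) → Fin g ⊕ Fin g //
      Semiconj ℓ ⇑(C.1 * flipPairs k * C.1⁻¹) Sum.swap ∧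
        Semiconj ℓ ⇑(C'.1 * flipPairs k * C'.1⁻¹) Sum.swap} =
      (2 * g) ^ unionComponents C C' := by
  rw [TwoInvolutions.card_semiconj_semiconj (conj_flipPairs_mul_self _) (conj_flipPairs_mul_self _)
    (conj_flipPairs_apply_ne _) (conj_flipPairs_apply_ne _) Sum.swap_swap, Nat.card_sum,
    Nat.card_eq_fintype_card, Fintype.card_fin, ← two_mul]
  rfl

theorem exists_sum_chordWeight_eq (g : ℕ) {k : ℕ} (C C' : LinearChordDiagram k) :
    ∃ ε : ℤˣ, ∑ t : Fin k → Fin g × Bool, chordWeight C.1 C'.1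
        (chordLabel Sum.swap (fun s => signedEquiv (Fin g) (t s)) ∘ C'.1.symm) =
      ((ε : ℤ) : ℚ) * (2 * g) ^ unionComponents C C' := by
  classical
  let τ := C.1 * flipPairs k * C.1⁻¹
  let τ' := C'.1 * flipPairs k * C'.1⁻¹
  obtain ⟨ε, hsum⟩ := exists_sum_eq_units_mul_card
    (fun ℓ : {ℓ : Fin (2 * k) → Fin g ⊕ Fin g // Semiconj ℓ τ' Sum.swap} =>
      chordWeight C.1 C'.1 ℓ.1)
    (fun ℓ => Semiconj ℓ.1 τ Sum.swap) (fun ℓ h => chordWeight_eq_zero h)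
    (fun ℓ ℓ' h h' => chordWeight_mul_chordWeight h h' ℓ.2 ℓ'.2)
  refine ⟨ε, ((((Equiv.refl _).arrowCongr (signedEquiv (Fin g))).trans
    (labelEquiv Sum.swap_swap C'.1)).sum_comp fun ℓ => chordWeight C.1 C'.1 ℓ.1).trans ?_⟩
  rw [hsum, Nat.card_congr ((subtypeSubtypeEquivSubtypeInter (Semiconj · τ' Sum.swap)
    (Semiconj · τ Sum.swap)).trans (subtypeEquivRight fun _ => and_comm)),
    card_semiconj_eq_pow_unionComponents]
  push_cast
  rfl

/-- for linear chord diagrams `C, C'` on `2k` vertices, the pairing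
`α_C(a_{C'})` equals `±(2g)^r` where `r` is the number of connected components of `C ∪ C'`. -/
theorem alpha_aTensor_pairing (g k : ℕ) (C C' : LinearChordDiagram k) :
    ∃ ε : ℚ, (ε = 1 ∨ ε = -1) ∧
      alphaHat g k C.1 (aTensor g k C'.1) =
        ε * (2 * (g : ℚ)) ^ (unionComponents C C') := by
  obtain ⟨ε, hsum⟩ := exists_sum_chordWeight_eq g C C'
  refine ⟨((Perm.sign C.1 * Perm.sign C'.1 * ε : ℤˣ) : ℤ), ?_, ?_⟩
  · rcases Int.units_eq_one_or (Perm.sign C.1 * Perm.sign C'.1 * ε) with h | h <;> simp [h]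
  · rw [alphaHat_aTensor, hsum]
    push_cast
    ring
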